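/- Let F₀ be a twice differentiable cdf with infinite right endpoint, eventually positive density p₀ = F₀′, satisfying the von Mises condition with index γ ≥ 0. Then lim_{u→∞} [u² p₀²(u)/(1 − F₀(u))] / ∫_u^∞ 2 x² p₀³(x)/(1 − F₀(x))² dx = 1/2. -/

import Mathlib

open Filter Real MeasureTheory

/-- `F` is a cumulative distribution function. -/
def IsCDF (F : ℝ → ℝ) : Prop :=
  Monotone F ∧ Tendsto F atBot (nhds 0) ∧ Tendsto F atTop (nhds 1)

/-- The von Mises condition with index `γ`. -/
def VonMises (F₀ : ℝ → ℝ) (γ : ℝ) : Prop :=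
  Tendsto (fun x => (1 - F₀ x) * deriv (deriv F₀) x / (deriv F₀ x) ^ 2)
    atTop (nhds (-γ - 1))

open Topology Set Asymptotics

/-! With `S = 1 - F₀`, `p = F₀'`, `g u = u² p(u)² / S(u)` and `h` the integrand, one computes
`g' = h · R` with `R = S/(u p) + S p'/p² + 1/2`. The von Mises condition gives `S p'/p² → -γ - 1`
and, since `(S/p)' = -1 - S p'/p²`, also `S/(u p) → γ`; hence `R → -1/2`. Once `R ≤ -1/4`, the
function `g²/S` decreases, so `g → 0`; then `h ≤ -4 g'` is integrable and L'Hôpital's rule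
applied to `g` and the tail integral `∫_u^∞ h` yields the limit `-(-1/2) = 1/2`. -/

lemma isLittleO_id_of_tendsto_deriv_zero {f f' : ℝ → ℝ}
    (hf : ∀ᶠ x in atTop, HasDerivAt f (f' x) x) (hf' : Tendsto f' atTop (𝓝 0)) :
    f =o[atTop] id := by
  refine isLittleO_iff.2 fun ε hε => ?_
  obtain ⟨a, ha⟩ := eventually_atTop.1 <| (hf.and (eventually_ge_atTop 0)).and
    (hf'.eventually (Metric.closedBall_mem_nhds 0 (half_pos hε)))
  have hlip : ∀ x ≥ a, ‖f x - f a‖ ≤ ε / 2 * ‖x - a‖ := fun x hx =>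
    (convex_Ici a).norm_image_sub_le_of_norm_hasDerivWithin_le
      (fun y hy => (ha y hy).1.1.hasDerivWithinAt)
      (fun y hy => by simpa using (ha y hy).2) self_mem_Ici hx
  filter_upwards [eventually_ge_atTop a, eventually_ge_atTop (2 * ‖f a‖ / ε)] with x hxa hxf
  have ha0 : 0 ≤ a := (ha a le_rfl).1.2
  have hfa : ‖f a‖ ≤ ε / 2 * x := by
    rw [div_le_iff₀ hε] at hxf; linarith
  have hxa' := hlip x hxa
  rw [Real.norm_of_nonneg (sub_nonneg.2 hxa)] at hxa'
  rw [id, Real.norm_of_nonneg (ha0.trans hxa)]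
  calc ‖f x‖ ≤ ‖f x - f a‖ + ‖f a‖ := norm_le_norm_sub_add _ _
    _ ≤ ε * x := by nlinarith

lemma tendsto_div_id_of_tendsto_deriv {f f' : ℝ → ℝ} {L : ℝ}
    (hf : ∀ᶠ x in atTop, HasDerivAt f (f' x) x) (hf' : Tendsto f' atTop (𝓝 L)) :
    Tendsto (fun x => f x / x) atTop (𝓝 L) := by
  have hlin : (fun x => f x - L * x) =o[atTop] id := by
    refine isLittleO_id_of_tendsto_deriv_zero (f' := fun x => f' x - L) ?_ ?_
    · filter_upwards [hf] with x hx
      exact (hx.sub ((hasDerivAt_id' x).const_mul L)).congr_deriv (by ring)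
    · simpa using hf'.sub_const L
  have := (hlin.tendsto_div_nhds_zero).add_const L
  rw [zero_add] at this
  refine this.congr' ?_
  filter_upwards [eventually_ne_atTop 0] with x hx
  simp only [id]
  field_simp
  ring

lemma hasDerivAt_integral_Ioi {h : ℝ → ℝ} {c u : ℝ} (hint : IntegrableOn h (Ioi c))
    (hh : ContinuousAt h u) (hu : c < u) :
    HasDerivAt (fun t => ∫ x in Ioi t, h x) (-h u) u := by
  have hFTC : HasDerivAt (fun t => ∫ x in c..t, h x) (h u) u :=
    intervalIntegral.integral_hasDerivAt_right
      ((intervalIntegrable_iff_integrableOn_Ioc_of_le hu.le).2 (hint.mono_set Ioc_subset_Ioi_self))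
      ⟨Ioi c, Ioi_mem_nhds hu, hint.aestronglyMeasurable⟩ hh
  refine (hFTC.const_sub (∫ x in Ioi c, h x)).congr_of_eventuallyEq ?_
  filter_upwards [Ioi_mem_nhds hu] with t ht
  rw [← intervalIntegral.integral_Ioi_sub_Ioi hint ht.out.le, sub_sub_cancel]

lemma tendsto_div_integral_Ioi_of_hasDerivAt_mul {g h R : ℝ → ℝ} {r : ℝ}
    (hg : ∀ᶠ x in atTop, HasDerivAt g (h x * R x) x) (hh : Continuous h)
    (hh_pos : ∀ᶠ x in atTop, 0 < h x) (hR : Tendsto R atTop (𝓝 r)) (hr : r < 0)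
    (hg0 : Tendsto g atTop (𝓝 0)) :
    Tendsto (fun u => g u / ∫ x in Ioi u, h x) atTop (𝓝 (-r)) := by
  obtain ⟨c, hc⟩ := eventually_atTop.1 <| (hg.and hh_pos).and
    (hR.eventually (eventually_le_nhds (by linarith : r < r / 2)))
  have hint : IntegrableOn h (Ioi c) := by
    have hg' : IntegrableOn (fun x => h x * R x) (Ioi c) :=
      integrableOn_Ioi_deriv_of_nonpos' (fun x hx => (hc x hx).1.1)
        (fun x hx => mul_nonpos_of_nonneg_of_nonpos (hc x hx.out.le).1.2.le
          ((hc x hx.out.le).2.trans (by linarith)))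
        hg0
    refine (hg'.const_mul (2 / r)).mono' hh.aestronglyMeasurable ?_
    refine (ae_restrict_iff' measurableSet_Ioi).2 (ae_of_all _ fun x hx => ?_)
    obtain ⟨⟨-, hhx⟩, hRx⟩ := hc x hx.out.le
    have hRr : 1 ≤ 2 * R x / r := by rw [le_div_iff_of_neg hr]; linarith
    calc ‖h x‖ = h x * 1 := by rw [Real.norm_of_nonneg hhx.le, mul_one]
      _ ≤ h x * (2 * R x / r) := mul_le_mul_of_nonneg_left hRr hhx.le
      _ = 2 / r * (h x * R x) := by ring
  refine HasDerivAt.lhopital_zero_atTop (g' := fun u => -h u) hg ?_ ?_ hg0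
    (tendsto_integral_Ioi_zero tendsto_id) ?_
  · filter_upwards [eventually_gt_atTop c] with u hu
    exact hasDerivAt_integral_Ioi hint hh.continuousAt hu
  · filter_upwards [hh_pos] with u hu
    exact neg_ne_zero.2 hu.ne'
  · refine hR.neg.congr' ?_
    filter_upwards [hh_pos] with u hu
    field_simp

lemma tendsto_zero_of_two_mul_deriv_mul_le {g g' S S' : ℝ → ℝ} {c : ℝ}
    (hg : ∀ x ≥ c, HasDerivAt g (g' x) x) (hS : ∀ x ≥ c, HasDerivAt S (S' x) x)
    (hS_pos : ∀ x ≥ c, 0 < S x) (hS0 : Tendsto S atTop (𝓝 0))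
    (hg_nonneg : ∀ x ≥ c, 0 ≤ g x) (hle : ∀ x ≥ c, 2 * g' x * S x ≤ g x * S' x) :
    Tendsto g atTop (𝓝 0) := by
  have hderiv : ∀ x ≥ c, HasDerivAt (fun y => g y ^ 2 / S y)
      (g x * (2 * g' x * S x - g x * S' x) / S x ^ 2) x := fun x hx =>
    (((hg x hx).fun_pow 2).fun_div (hS x hx) (hS_pos x hx).ne').congr_deriv (by ring)
  have hanti : AntitoneOn (fun y => g y ^ 2 / S y) (Ici c) := by
    refine antitoneOn_of_hasDerivWithinAt_nonpos (convex_Ici c)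
      (fun x hx => (hderiv x hx).continuousAt.continuousWithinAt)
      (fun x hx => (hderiv x (interior_subset hx)).hasDerivWithinAt) fun x hx => ?_
    have hx : x ≥ c := interior_subset hx
    exact div_nonpos_of_nonpos_of_nonneg
      (mul_nonpos_of_nonneg_of_nonpos (hg_nonneg x hx) (sub_nonpos.2 (hle x hx))) (sq_nonneg _)
  have hsq : Tendsto (fun x => g x ^ 2) atTop (𝓝 0) := by
    refine tendsto_of_tendsto_of_tendsto_of_le_of_le' tendsto_const_nhds
      (by simpa using hS0.const_mul (g c ^ 2 / S c))
      (Eventually.of_forall fun x => sq_nonneg (g x)) ?_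
    filter_upwards [eventually_ge_atTop c] with x hx
    have := hanti self_mem_Ici hx hx
    rwa [div_le_iff₀ (hS_pos x hx)] at this
  refine (by simpa using hsq.sqrt : Tendsto (fun x => √(g x ^ 2)) atTop (𝓝 0)).congr' ?_
  filter_upwards [eventually_ge_atTop c] with x hx
  exact Real.sqrt_sq (hg_nonneg x hx)

section

variable {S p q : ℝ → ℝ}

lemma tendsto_div_mul_of_vonMises {γ : ℝ}
    (hS : ∀ x, HasDerivAt S (-p x) x) (hp : ∀ x, HasDerivAt p (q x) x)
    (hpos : ∀ᶠ x in atTop, 0 < p x)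
    (hVM : Tendsto (fun x => S x * q x / p x ^ 2) atTop (𝓝 (-γ - 1))) :
    Tendsto (fun x => S x / (x * p x)) atTop (𝓝 γ) := by
  have hderiv : ∀ᶠ x in atTop, HasDerivAt (fun y => S y / p y) (-1 - S x * q x / p x ^ 2) x := by
    filter_upwards [hpos] with x hx
    refine ((hS x).div (hp x) hx.ne').congr_deriv ?_
    field_simp
  have hlim : Tendsto (fun x => -1 - S x * q x / p x ^ 2) atTop (𝓝 γ) := by
    convert hVM.const_sub (-1) using 2; ring
  refine (tendsto_div_id_of_tendsto_deriv hderiv hlim).congr fun x => ?_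
  rw [div_div, mul_comm]

lemma hasDerivAt_sq_mul_sq_div (hS : ∀ x, HasDerivAt S (-p x) x)
    (hp : ∀ x, HasDerivAt p (q x) x) {x : ℝ} (hx : x ≠ 0) (hpx : p x ≠ 0) (hSx : S x ≠ 0) :
    HasDerivAt (fun y => y ^ 2 * p y ^ 2 / S y)
      (2 * x ^ 2 * p x ^ 3 / S x ^ 2 * (S x / (x * p x) + S x * q x / p x ^ 2 + 1 / 2)) x := by
  refine (((hasDerivAt_pow 2 x).fun_mul ((hp x).fun_pow 2)).fun_div (hS x) hSx).congr_deriv ?_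
  field_simp
  ring

lemma tendsto_sq_mul_sq_div_zero (hS : ∀ x, HasDerivAt S (-p x) x)
    (hp : ∀ x, HasDerivAt p (q x) x) (hS_pos : ∀ x, 0 < S x) (hS0 : Tendsto S atTop (𝓝 0))
    (hpos : ∀ᶠ x in atTop, 0 < p x)
    (hR : Tendsto (fun x => S x / (x * p x) + S x * q x / p x ^ 2 + 1 / 2) atTop
      (𝓝 (-(1 / 2)))) :
    Tendsto (fun x => x ^ 2 * p x ^ 2 / S x) atTop (𝓝 0) := by
  obtain ⟨c, hc⟩ := eventually_atTop.1 <| (eventually_gt_atTop 0).and <| hpos.and <|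
    hR.eventually (eventually_le_nhds (by norm_num : -(1 / 2 : ℝ) < -(1 / 4)))
  refine tendsto_zero_of_two_mul_deriv_mul_le
    (fun x hx => hasDerivAt_sq_mul_sq_div hS hp (hc x hx).1.ne' (hc x hx).2.1.ne' (hS_pos x).ne')
    (fun x _ => hS x) (fun x _ => hS_pos x) hS0 (fun x _ => by have := hS_pos x; positivity)
    fun x hx => ?_
  obtain ⟨hx0, hpx, hRx⟩ := hc x hx
  have hSx := hS_pos x
  set H := 2 * x ^ 2 * p x ^ 3 / S x ^ 2
  -- `x² p²/S · p = H S / 2`, so the claim reads `H S (2R + 1/2) ≤ 0`.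
  have hgp : x ^ 2 * p x ^ 2 / S x * -p x = -(H * S x / 2) := by
    simp only [H]; field_simp
  have hHS : 0 ≤ H * S x := by positivity
  rw [hgp]
  nlinarith

end

theorem vonMises_integral_ratio_half_general
    (F₀ : ℝ → ℝ) (γ : ℝ)
    (hcdf : IsCDF F₀) (hend : ∀ x, F₀ x < 1)
    (hdiff : ∀ x, DifferentiableAt ℝ F₀ x)
    (hdiff2 : ∀ x, DifferentiableAt ℝ (deriv F₀) x)
    (hpos : ∀ᶠ x in atTop, 0 < deriv F₀ x)
    (hVM : VonMises F₀ γ) :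
    Tendsto
      (fun u =>
        (u ^ 2 * (deriv F₀ u) ^ 2 / (1 - F₀ u)) /
          ∫ x in Set.Ioi u, 2 * x ^ 2 * (deriv F₀ x) ^ 3 / (1 - F₀ x) ^ 2)
      atTop (nhds (1 / 2)) := by
  set S : ℝ → ℝ := fun x => 1 - F₀ x
  set p := deriv F₀
  have hS : ∀ x, HasDerivAt S (-p x) x := fun x => (hdiff x).hasDerivAt.const_sub 1
  have hp : ∀ x, HasDerivAt p (deriv p x) x := fun x => (hdiff2 x).hasDerivAt
  have hS_pos : ∀ x, 0 < S x := fun x => sub_pos.2 (hend x)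
  have hS0 : Tendsto S atTop (𝓝 0) := by simpa using hcdf.2.2.const_sub 1
  have hR : Tendsto (fun x => S x / (x * p x) + S x * deriv p x / p x ^ 2 + 1 / 2) atTop
      (𝓝 (-(1 / 2))) := by
    convert ((tendsto_div_mul_of_vonMises hS hp hpos hVM).add hVM).add_const (1 / 2) using 2
    ring
  have hderiv : ∀ᶠ x in atTop, HasDerivAt (fun y => y ^ 2 * p y ^ 2 / S y)
      (2 * x ^ 2 * p x ^ 3 / S x ^ 2 *
        (S x / (x * p x) + S x * deriv p x / p x ^ 2 + 1 / 2)) x := by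
    filter_upwards [eventually_gt_atTop 0, hpos] with x hx hpx
    exact hasDerivAt_sq_mul_sq_div hS hp hx.ne' hpx.ne' (hS_pos x).ne'
  have hh : Continuous fun x => 2 * x ^ 2 * p x ^ 3 / S x ^ 2 := by
    have hpc : Continuous p := continuous_iff_continuousAt.2 fun x => (hp x).continuousAt
    have hSc : Continuous S := continuous_iff_continuousAt.2 fun x => (hS x).continuousAt
    exact ((continuous_const.mul (continuous_pow 2)).mul (hpc.pow 3)).div (hSc.pow 2)
      fun x => pow_ne_zero 2 (hS_pos x).ne'
  have hh_pos : ∀ᶠ x in atTop, 0 < 2 * x ^ 2 * p x ^ 3 / S x ^ 2 := by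
    filter_upwards [eventually_gt_atTop 0, hpos] with x hx hpx
    have := hS_pos x
    positivity
  have := tendsto_div_integral_Ioi_of_hasDerivAt_mul hderiv hh hh_pos hR (by norm_num)
    (tendsto_sq_mul_sq_div_zero hS hp hS_pos hS0 hpos hR)
  rwa [neg_neg] at this

/-- Under the von Mises condition with index `γ ≥ 0`,
`[u² p₀²(u)/(1 - F₀(u))] / ∫_u^∞ 2x² p₀³(x)/(1 - F₀(x))² dx → 1/2` as `u → ∞`. -/
theorem vonMises_integral_ratio_half
    (F₀ : ℝ → ℝ) (γ : ℝ) (hγ : 0 ≤ γ)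
    (hcdf : IsCDF F₀) (hend : ∀ x, F₀ x < 1)
    (hdiff : ∀ x, DifferentiableAt ℝ F₀ x)
    (hdiff2 : ∀ x, DifferentiableAt ℝ (deriv F₀) x)
    (hpos : ∀ᶠ x in atTop, 0 < deriv F₀ x)
    (hVM : VonMises F₀ γ) :
    Tendsto
      (fun u =>
        (u ^ 2 * (deriv F₀ u) ^ 2 / (1 - F₀ u)) /
          ∫ x in Set.Ioi u, 2 * x ^ 2 * (deriv F₀ x) ^ 3 / (1 - F₀ x) ^ 2)
      atTop (nhds (1 / 2)) :=
  vonMises_integral_ratio_half_general F₀ γ hcdf hend hdiff hdiff2 hpos hVM
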